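/- arXiv:2107.02429 — 2 statements merged into one kernel-verified Lean document; each statement's English description precedes it below -/
import Mathlib

section
/- Let m₁,…,mₙ ∈ ℝ^N be mutually orthogonal nonzero vectors of equal norm, ξ₁,…,ξₙ ∈ ℝ such that u = −Σⱼ sin(ξⱼ)mⱼ and v = Σⱼ cos(ξⱼ)mⱼ are linearly independent, and let S = span{u,v}. Then for each i, ‖Proj_S mᵢ‖²/‖mᵢ‖² = (Σⱼ sin²(ξⱼ − ξᵢ)) / (Σ_{j>k} sin²(ξⱼ − ξₖ)). -/
open Real Finset

lemma lagrange_aux (n : ℕ) (s c : Fin n → ℝ) :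
    ∑ p ∈ Finset.univ.filter (fun p : Fin n × Fin n => p.2 < p.1),
        (s p.1 * c p.2 - c p.1 * s p.2) ^ 2
      = (∑ j, s j ^ 2) * (∑ j, c j ^ 2) - (∑ j, s j * c j) ^ 2 := by
  set A := ∑ j, s j ^ 2
  set B := ∑ j, s j * c j
  set C := ∑ j, c j ^ 2
  set f : Fin n × Fin n → ℝ := fun p => (s p.1 * c p.2 - c p.1 * s p.2) ^ 2 with hf
  have htot : ∑ p ∈ Finset.univ ×ˢ Finset.univ, f p = 2 * (A * C - B ^ 2) := by
    rw [Finset.sum_product]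
    have h1 : ∀ j : Fin n, ∑ k, f (j, k)
        = s j ^ 2 * C + c j ^ 2 * A - 2 * (s j * c j) * B := by
      intro j
      have : ∀ k : Fin n, f (j, k)
          = s j ^ 2 * c k ^ 2 + c j ^ 2 * s k ^ 2 - 2 * (s j * c j) * (s k * c k) := by
        intro k; simp only [hf]; ring
      rw [Finset.sum_congr rfl fun k _ => this k]
      rw [Finset.sum_sub_distrib, Finset.sum_add_distrib, ← Finset.mul_sum, ← Finset.mul_sum,
        ← Finset.mul_sum]
    rw [Finset.sum_congr rfl fun j _ => h1 j]
    rw [Finset.sum_sub_distrib, Finset.sum_add_distrib, ← Finset.sum_mul, ← Finset.sum_mul]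
    have hB : ∑ j, 2 * (s j * c j) * B = B * (2 * B) := by
      rw [show (∑ j, 2 * (s j * c j) * B) = ∑ j, (s j * c j) * (2 * B) from
        Finset.sum_congr rfl fun j _ => by ring, ← Finset.sum_mul]
    rw [hB]; ring
  have hsplit : ∑ p ∈ Finset.univ ×ˢ Finset.univ, f p
      = ∑ p ∈ (Finset.univ ×ˢ Finset.univ).filter (fun p : Fin n × Fin n => p.2 < p.1), f p
        + ∑ p ∈ (Finset.univ ×ˢ Finset.univ).filter (fun p : Fin n × Fin n => ¬ p.2 < p.1), f p :=
    (Finset.sum_filter_add_sum_filter_not _ _ _).symm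
  have h2 : ∑ p ∈ (Finset.univ ×ˢ Finset.univ).filter (fun p : Fin n × Fin n => ¬ p.2 < p.1), f p
      = ∑ p ∈ (Finset.univ ×ˢ Finset.univ).filter (fun p : Fin n × Fin n => p.1 < p.2), f p := by
    apply (Finset.sum_subset ?_ ?_).symm
    · intro p hp
      simp only [Finset.mem_filter] at hp ⊢
      exact ⟨hp.1, not_lt_of_gt hp.2⟩
    · intro p hp hnp
      simp only [Finset.mem_filter] at hp hnp
      have : p.1 = p.2 := le_antisymm (not_lt.mp hp.2) (not_lt.mp fun h => hnp ⟨hp.1, h⟩)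
      show (s p.1 * c p.2 - c p.1 * s p.2) ^ 2 = 0
      rw [this]; ring
  have h3 : ∑ p ∈ (Finset.univ ×ˢ Finset.univ).filter (fun p : Fin n × Fin n => p.1 < p.2), f p
      = ∑ p ∈ (Finset.univ ×ˢ Finset.univ).filter (fun p : Fin n × Fin n => p.2 < p.1), f p := by
    refine Finset.sum_nbij' (fun p => (p.2, p.1)) (fun p => (p.2, p.1)) ?_ ?_ ?_ ?_ ?_
    · intro p hp; simp only [Finset.mem_filter, Finset.mem_product, Finset.mem_univ,
        true_and] at hp ⊢; exact hp
    · intro p hp; simp only [Finset.mem_filter, Finset.mem_product, Finset.mem_univ,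
        true_and] at hp ⊢; exact hp
    · intro p _; rfl
    · intro p _; rfl
    · intro p _; show (s p.1 * c p.2 - c p.1 * s p.2) ^ 2 = (s p.2 * c p.1 - c p.2 * s p.1) ^ 2
      ring
  have : ∑ p ∈ (Finset.univ ×ˢ Finset.univ).filter (fun p : Fin n × Fin n => p.2 < p.1), f p
      = A * C - B ^ 2 := by
    rw [hsplit, h2, h3] at htot; linarith
  rw [show (Finset.univ : Finset (Fin n × Fin n)) = Finset.univ ×ˢ Finset.univ from
    Finset.univ_product_univ.symm]
  exact this

theorem stmt_13 (N n : ℕ) (hn : 0 < n) (hnN : n ≤ N)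
    (m : Fin n → EuclideanSpace ℝ (Fin N)) (l : ℝ) (hl : l ≠ 0)
    (horth : ∀ i j, i ≠ j → inner ℝ (m i) (m j) = (0 : ℝ))
    (hnorm : ∀ i, ‖m i‖ = l)
    (ξ : Fin n → ℝ) (u v : EuclideanSpace ℝ (Fin N))
    (hu : u = -∑ j, Real.sin (ξ j) • m j)
    (hv : v = ∑ j, Real.cos (ξ j) • m j)
    (hind : LinearIndependent ℝ ![u, v])
    (S : Submodule ℝ (EuclideanSpace ℝ (Fin N)))
    (hS : S = Submodule.span ℝ ({u, v} : Set (EuclideanSpace ℝ (Fin N)))) :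
    ∀ i, ‖(S.orthogonalProjectionOnto (m i) : EuclideanSpace ℝ (Fin N))‖ ^ 2 / ‖m i‖ ^ 2
      = (∑ j, Real.sin (ξ j - ξ i) ^ 2)
        / ∑ p ∈ Finset.univ.filter (fun p : Fin n × Fin n => p.2 < p.1),
            Real.sin (ξ p.1 - ξ p.2) ^ 2 := by
  intro i
  set s : Fin n → ℝ := fun j => Real.sin (ξ j) with hs
  set c : Fin n → ℝ := fun j => Real.cos (ξ j) with hc
  set A : ℝ := ∑ j, s j ^ 2 with hA
  set B : ℝ := ∑ j, s j * c j with hB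
  set C : ℝ := ∑ j, c j ^ 2 with hC
  set D : ℝ := A * C - B ^ 2 with hD
  -- inner products of combinations
  have hcomb : ∀ a b : Fin n → ℝ,
      (inner ℝ (∑ j, a j • m j) (∑ j, b j • m j) : ℝ) = l ^ 2 * ∑ j, a j * b j := by
    intro a b
    rw [sum_inner]
    have h1 : ∀ j : Fin n, (inner ℝ (a j • m j) (∑ k, b k • m k) : ℝ) = a j * b j * l ^ 2 := by
      intro j
      rw [real_inner_smul_left, inner_sum]
      have h2 : ∑ k, (inner ℝ (m j) (b k • m k) : ℝ) = b j * l ^ 2 := by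
        rw [Finset.sum_eq_single j]
        · rw [real_inner_smul_right, real_inner_self_eq_norm_sq, hnorm]
        · intro k _ hk
          rw [real_inner_smul_right, horth j k (Ne.symm hk), mul_zero]
        · exact fun h => absurd (Finset.mem_univ j) h
      rw [h2]; ring
    rw [Finset.sum_congr rfl fun j _ => h1 j, Finset.mul_sum]
    exact Finset.sum_congr rfl fun j _ => by ring
  have hmi : ∀ a : Fin n → ℝ, (inner ℝ (m i) (∑ j, a j • m j) : ℝ) = l ^ 2 * a i := by
    intro a
    rw [inner_sum]
    rw [Finset.sum_eq_single i]
    · rw [real_inner_smul_right, real_inner_self_eq_norm_sq, hnorm]; ring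
    · intro k _ hk
      rw [real_inner_smul_right, horth i k (Ne.symm hk), mul_zero]
    · exact fun h => absurd (Finset.mem_univ i) h
  have huu : (inner ℝ u u : ℝ) = l ^ 2 * A := by
    rw [hu, inner_neg_neg, hcomb, hA]
    congr 1
    exact Finset.sum_congr rfl fun j _ => (sq (s j)).symm
  have hvv : (inner ℝ v v : ℝ) = l ^ 2 * C := by
    rw [hv, hcomb, hC]
    congr 1
    exact Finset.sum_congr rfl fun j _ => (sq (c j)).symm
  have huv : (inner ℝ u v : ℝ) = -(l ^ 2 * B) := by
    rw [hu, hv, inner_neg_left, hcomb, hB]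
  have hmu : (inner ℝ (m i) u : ℝ) = -(l ^ 2 * s i) := by
    rw [hu, inner_neg_right, hmi]
  have hmv : (inner ℝ (m i) v : ℝ) = l ^ 2 * c i := by
    rw [hv, hmi]
  -- positivity of D
  have hpair := LinearIndependent.pair_iff.mp hind
  have hu0 : u ≠ 0 := fun h0 => one_ne_zero ((hpair 1 0 (by simp [h0])).1)
  have hv0 : v ≠ 0 := fun h0 => one_ne_zero ((hpair 0 1 (by simp [h0])).2)
  have h1 : (inner ℝ u v : ℝ) < ‖u‖ * ‖v‖ := by
    apply inner_lt_norm_mul_iff_real.mpr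
    intro h
    have := hpair ‖v‖ (-‖u‖) (by rw [neg_smul, h]; abel)
    exact norm_ne_zero_iff.mpr hv0 this.1
  have h2 : -(inner ℝ u v : ℝ) < ‖u‖ * ‖v‖ := by
    have h3 : (inner ℝ (-u) v : ℝ) < ‖-u‖ * ‖v‖ := by
      apply inner_lt_norm_mul_iff_real.mpr
      intro h
      rw [smul_neg, norm_neg] at h
      have := hpair ‖v‖ ‖u‖ (by rw [← h]; abel)
      exact norm_ne_zero_iff.mpr hv0 this.1
    rwa [inner_neg_left, norm_neg] at h3
  have hcs : (inner ℝ u v : ℝ) ^ 2 < (‖u‖ * ‖v‖) ^ 2 := sq_lt_sq' (by linarith) h1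
  have hDpos : 0 < D := by
    have e1 : (‖u‖ * ‖v‖) ^ 2 = (l ^ 2 * A) * (l ^ 2 * C) := by
      rw [mul_pow, ← real_inner_self_eq_norm_sq, ← real_inner_self_eq_norm_sq, huu, hvv]
    rw [e1, huv] at hcs
    have hl4 : 0 < l ^ 4 := by positivity
    nlinarith [hcs]
  have hDne : D ≠ 0 := ne_of_gt hDpos
  have hl2 : l ^ 2 ≠ 0 := pow_ne_zero 2 hl
  -- the projection
  set α : ℝ := (-(s i) * C + c i * B) / D with hα
  set β : ℝ := (-(s i) * B + c i * A) / D with hβ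
  set p : EuclideanSpace ℝ (Fin N) := α • u + β • v with hp
  have hpS : p ∈ S := by
    rw [hS]
    exact Submodule.add_mem _
      (Submodule.smul_mem _ _ (Submodule.subset_span (by simp)))
      (Submodule.smul_mem _ _ (Submodule.subset_span (by simp)))
  have hvu : (inner ℝ v u : ℝ) = -(l ^ 2 * B) := by rw [real_inner_comm, huv]
  have hou : (inner ℝ (m i - p) u : ℝ) = 0 := by
    rw [inner_sub_left, hp, inner_add_left, real_inner_smul_left, real_inner_smul_left,
      huu, hvu, hmu, hα, hβ]
    field_simp
    ring
  have hov : (inner ℝ (m i - p) v : ℝ) = 0 := by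
    rw [inner_sub_left, hp, inner_add_left, real_inner_smul_left, real_inner_smul_left,
      huv, hvv, hmv, hα, hβ]
    field_simp
    ring
  have hproj : (S.orthogonalProjectionOnto (m i) : EuclideanSpace ℝ (Fin N)) = p := by
    rw [← Submodule.starProjection_apply]
    apply Submodule.eq_starProjection_of_mem_of_inner_eq_zero hpS
    intro w hw
    rw [hS, Submodule.mem_span_pair] at hw
    obtain ⟨a, b, rfl⟩ := hw
    rw [inner_add_right, real_inner_smul_right, real_inner_smul_right, hou, hov]
    ring
  have hpp : ‖p‖ ^ 2 = l ^ 2 * (α ^ 2 * A - 2 * α * β * B + β ^ 2 * C) := by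
    rw [← real_inner_self_eq_norm_sq, hp, inner_add_left, inner_add_right, inner_add_right,
      real_inner_smul_left, real_inner_smul_left, real_inner_smul_left, real_inner_smul_left,
      real_inner_smul_right, real_inner_smul_right, real_inner_smul_right, real_inner_smul_right,
      huu, hvv, huv, hvu]
    ring
  have hNum : ∑ j, Real.sin (ξ j - ξ i) ^ 2
      = C * s i ^ 2 - 2 * B * (s i * c i) + A * c i ^ 2 := by
    have h4 : ∀ j : Fin n, Real.sin (ξ j - ξ i) ^ 2
        = c i ^ 2 * s j ^ 2 - 2 * (s i * c i) * (s j * c j) + s i ^ 2 * c j ^ 2 := by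
      intro j; rw [Real.sin_sub]; ring
    rw [Finset.sum_congr rfl fun j _ => h4 j, Finset.sum_add_distrib, Finset.sum_sub_distrib,
      ← Finset.mul_sum, ← Finset.mul_sum, ← Finset.mul_sum, hA, hB, hC]
    ring
  have hDen : ∑ p ∈ Finset.univ.filter (fun p : Fin n × Fin n => p.2 < p.1),
      Real.sin (ξ p.1 - ξ p.2) ^ 2 = D := by
    rw [Finset.sum_congr rfl fun q _ => by rw [Real.sin_sub]]
    exact lagrange_aux n s c
  rw [hproj, hpp, hnorm, hNum, hDen, mul_div_cancel_left₀ _ hl2, hα, hβ, eq_div_iff hDne]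
  have e : ∀ x y : ℝ, (x / D) ^ 2 * A - 2 * (x / D) * (y / D) * B + (y / D) ^ 2 * C
      = (x ^ 2 * A - 2 * x * y * B + y ^ 2 * C) / D ^ 2 := by intro x y; ring
  rw [e, div_mul_eq_mul_div, div_eq_iff (pow_ne_zero 2 hDne), hD]
  ring
end

section
/- For any real numbers ξ₁,…,ξₙ, the double sum Σᵢ Σⱼ sin²(ξⱼ − ξᵢ) equals 2·Σ_{j>k} sin²(ξⱼ − ξₖ). Consequently, under the hypotheses of the projection formula, Σᵢ₌₁ⁿ ‖Proj_S mᵢ‖²/‖mᵢ‖² = 2. -/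
open Real Finset

theorem stmt_14 (N n : ℕ) (hn : 0 < n) (hnN : n ≤ N) (ξ : Fin n → ℝ)
    (m : Fin n → EuclideanSpace ℝ (Fin N)) (l : ℝ) (hl : l ≠ 0)
    (horth : ∀ i j, i ≠ j → inner ℝ (m i) (m j) = (0 : ℝ))
    (hnorm : ∀ i, ‖m i‖ = l)
    (u v : EuclideanSpace ℝ (Fin N))
    (hu : u = -∑ j, Real.sin (ξ j) • m j)
    (hv : v = ∑ j, Real.cos (ξ j) • m j)
    (hind : LinearIndependent ℝ ![u, v])
    (S : Submodule ℝ (EuclideanSpace ℝ (Fin N)))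
    (hS : S = Submodule.span ℝ ({u, v} : Set (EuclideanSpace ℝ (Fin N)))) :
    (∑ i, ∑ j, Real.sin (ξ j - ξ i) ^ 2)
      = 2 * ∑ p ∈ Finset.univ.filter (fun p : Fin n × Fin n => p.2 < p.1),
          Real.sin (ξ p.1 - ξ p.2) ^ 2 ∧
    (∑ i, ‖(S.orthogonalProjectionOnto (m i) : EuclideanSpace ℝ (Fin N))‖ ^ 2 / ‖m i‖ ^ 2)
      = 2 := by
  constructor
  · -- symmetry part
    have key : ∀ i j : Fin n, Real.sin (ξ j - ξ i) ^ 2 = Real.sin (ξ i - ξ j) ^ 2 := by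
      intro i j
      rw [show ξ j - ξ i = -(ξ i - ξ j) by ring, Real.sin_neg, neg_sq]
    have h0 : (∑ i, ∑ j, Real.sin (ξ j - ξ i) ^ 2)
        = ∑ p : Fin n × Fin n, Real.sin (ξ p.2 - ξ p.1) ^ 2 := by
      rw [← Finset.sum_product']
      rfl
    rw [h0, ← Finset.sum_filter_add_sum_filter_not Finset.univ
        (fun p : Fin n × Fin n => p.2 < p.1)]
    have h1 : ∑ p ∈ Finset.univ.filter (fun p : Fin n × Fin n => ¬ p.2 < p.1),
        Real.sin (ξ p.2 - ξ p.1) ^ 2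
        = ∑ p ∈ Finset.univ.filter (fun p : Fin n × Fin n => p.1 < p.2),
        Real.sin (ξ p.2 - ξ p.1) ^ 2 := by
      refine (Finset.sum_subset ?_ ?_).symm
      · intro p hp
        simp only [Finset.mem_filter, Finset.mem_univ, true_and, not_lt] at hp ⊢
        exact hp.le
      · intro p hmem hnot
        simp only [Finset.mem_filter, Finset.mem_univ, true_and, not_lt] at hmem hnot
        have : p.1 = p.2 := le_antisymm hmem hnot
        rw [this, sub_self, Real.sin_zero]
        ring
    have h2 : ∑ p ∈ Finset.univ.filter (fun p : Fin n × Fin n => p.1 < p.2),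
        Real.sin (ξ p.2 - ξ p.1) ^ 2
        = ∑ p ∈ Finset.univ.filter (fun p : Fin n × Fin n => p.2 < p.1),
        Real.sin (ξ p.1 - ξ p.2) ^ 2 := by
      refine Finset.sum_nbij' (fun p => Prod.swap p) (fun p => Prod.swap p) ?_ ?_ ?_ ?_ ?_
      · intro p hp
        simp only [Finset.mem_filter, Finset.mem_univ, true_and] at hp ⊢
        exact hp
      · intro p hp
        simp only [Finset.mem_filter, Finset.mem_univ, true_and] at hp ⊢
        exact hp
      · intro p _; rfl
      · intro p _; rfl
      · intro p _; rfl
    have h3 : ∀ p ∈ Finset.univ.filter (fun p : Fin n × Fin n => p.2 < p.1),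
        Real.sin (ξ p.2 - ξ p.1) ^ 2 = Real.sin (ξ p.1 - ξ p.2) ^ 2 := fun p _ => key _ _
    rw [Finset.sum_congr rfl h3, h1, h2]
    ring
  · -- projection part
    have hl2 : l ^ 2 ≠ 0 := pow_ne_zero 2 hl
    -- every unit vector of S has ∑ ⟪e, m i⟫² = l²
    have key : ∀ e : EuclideanSpace ℝ (Fin N), e ∈ S → ‖e‖ = 1 →
        (∑ i, (inner ℝ e (m i) : ℝ) ^ 2) = l ^ 2 := by
      intro e heS hee
      rw [hS] at heS
      obtain ⟨a, b', hab⟩ := Submodule.mem_span_pair.mp heS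
      set c : Fin n → ℝ := fun j => -(a * Real.sin (ξ j)) + b' * Real.cos (ξ j) with hc
      clear_value c
      have he' : e = ∑ j, c j • m j := by
        rw [← hab, hu, hv, Finset.smul_sum, smul_neg, Finset.smul_sum,
          ← Finset.sum_neg_distrib, ← Finset.sum_add_distrib]
        refine Finset.sum_congr rfl fun j _ => ?_
        rw [smul_smul, smul_smul, hc]
        module
      have hinner : ∀ i, (inner ℝ e (m i) : ℝ) = c i * l ^ 2 := by
        intro i
        rw [he', sum_inner]
        rw [Finset.sum_eq_single i]
        · rw [inner_smul_left, RCLike.conj_to_real, real_inner_self_eq_norm_sq, hnorm]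
        · intro j _ hj
          rw [inner_smul_left, horth j i hj, mul_zero]
        · intro h; exact absurd (Finset.mem_univ i) h
      have hnormsq : (∑ j, c j ^ 2) * l ^ 2 = 1 := by
        have : (inner ℝ e e : ℝ) = ∑ j, c j * (c j * l ^ 2) := by
          conv_lhs => rw [he']
          rw [sum_inner]
          refine Finset.sum_congr rfl fun j _ => ?_
          rw [inner_smul_left, RCLike.conj_to_real, real_inner_comm, ← he', hinner]
        calc (∑ j, c j ^ 2) * l ^ 2 = ∑ j, c j * (c j * l ^ 2) := by
              rw [Finset.sum_mul]
              exact Finset.sum_congr rfl fun j _ => by ring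
          _ = (inner ℝ e e : ℝ) := this.symm
          _ = 1 := by rw [real_inner_self_eq_norm_sq, hee]; norm_num
      calc (∑ i, (inner ℝ e (m i) : ℝ) ^ 2) = ∑ i, c i ^ 2 * (l ^ 2 * l ^ 2) := by
            refine Finset.sum_congr rfl fun i _ => ?_
            rw [hinner]; ring
        _ = ((∑ i, c i ^ 2) * l ^ 2) * l ^ 2 := by
            rw [Finset.sum_mul, Finset.sum_mul]
            exact Finset.sum_congr rfl fun i _ => by ring
        _ = l ^ 2 := by rw [hnormsq, one_mul]
    have hrange : Set.range ![u, v] = ({u, v} : Set (EuclideanSpace ℝ (Fin N))) := by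
      simp [Matrix.range_cons, Matrix.range_empty, Set.pair_comm]
    have hd : Module.finrank ℝ S = 2 := by
      rw [hS, ← hrange, finrank_span_eq_card hind, Fintype.card_fin]
    haveI : FiniteDimensional ℝ S := FiniteDimensional.finiteDimensional_submodule S
    let b := stdOrthonormalBasis ℝ S
    have hPnorm : ∀ i, ‖(S.orthogonalProjectionOnto (m i) : EuclideanSpace ℝ (Fin N))‖ ^ 2
        = ∑ k, (inner ℝ ((b k : EuclideanSpace ℝ (Fin N))) (m i) : ℝ) ^ 2 := by
      intro i
      have h1 : (‖S.orthogonalProjectionOnto (m i)‖ : ℝ) ^ 2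
          = (inner ℝ (S.orthogonalProjectionOnto (m i)) (S.orthogonalProjectionOnto (m i)) : ℝ) :=
        (real_inner_self_eq_norm_sq _).symm
      rw [show ‖(S.orthogonalProjectionOnto (m i) : EuclideanSpace ℝ (Fin N))‖
          = ‖S.orthogonalProjectionOnto (m i)‖ from rfl, h1,
        b.orthogonalProjectionOnto_apply_eq_sum, b.orthonormal.inner_sum]
      exact Finset.sum_congr rfl fun k _ => by
        rw [RCLike.conj_to_real]; ring
    calc (∑ i, ‖(S.orthogonalProjectionOnto (m i) : EuclideanSpace ℝ (Fin N))‖ ^ 2 / ‖m i‖ ^ 2)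
        = ∑ i, (∑ k, (inner ℝ ((b k : EuclideanSpace ℝ (Fin N))) (m i) : ℝ) ^ 2) / l ^ 2 := by
          refine Finset.sum_congr rfl fun i _ => ?_
          rw [hPnorm, hnorm]
      _ = (∑ k, ∑ i, (inner ℝ ((b k : EuclideanSpace ℝ (Fin N))) (m i) : ℝ) ^ 2) / l ^ 2 := by
          rw [← Finset.sum_div, Finset.sum_comm]
      _ = (∑ k : Fin (Module.finrank ℝ S), l ^ 2) / l ^ 2 := by
          congr 1
          refine Finset.sum_congr rfl fun k _ => ?_
          exact key (b k : EuclideanSpace ℝ (Fin N)) (b k).2 (b.orthonormal.1 k)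
      _ = 2 := by
          rw [Finset.sum_const, Finset.card_univ, Fintype.card_fin, hd,
            nsmul_eq_mul]
          field_simp
          norm_num
end
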